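/- arXiv:0910.4701 — 4 statements merged into one kernel-verified Lean document; each statement's English description precedes it below -/
import Mathlib

section
/- There exists a constant C > 0 such that for every u ∈ V and every v ∈ H, the sequence B(u,v) belongs to H and |B(u,v)|_H ≤ C ||u||_V |v|_H, where B is the GOY bilinear operator. -/
open ComplexConjugate

noncomputable section

/-- Extension of a sequence `(u_n)_{n ≥ 1}` to integer indices, with the boundary
convention `u_m = 0` for `m ≤ 0` (in particular `u_0 = u_{-1} = 0`). -/
def ext (u : ℕ → ℂ) : ℤ → ℂ := fun m => if 1 ≤ m then u m.toNat else 0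

/-- Wave numbers `k_n = k₀ 2^n`. -/
def kseq (k₀ : ℝ) (n : ℤ) : ℝ := k₀ * 2 ^ n

/-- The GOY bilinear operator. -/
def goyB (k₀ : ℝ) (u v : ℕ → ℂ) : ℕ → ℂ := fun n =>
  Complex.I * (kseq k₀ n) *
    ( (1/4 : ℂ) * conj (ext v ((n : ℤ) - 1)) * conj (ext u ((n : ℤ) + 1))
      - (1/2 : ℂ) * (conj (ext u ((n : ℤ) + 1)) * conj (ext v ((n : ℤ) + 2))
          + conj (ext v ((n : ℤ) + 1)) * conj (ext u ((n : ℤ) + 2)))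
      + (1/8 : ℂ) * conj (ext u ((n : ℤ) - 1)) * conj (ext v ((n : ℤ) - 2)) )

/-- Membership in `H`: square-summability over `n ≥ 1`. -/
def memH (u : ℕ → ℂ) : Prop := Summable (fun n : ℕ => ‖u (n + 1)‖ ^ 2)

/-- The `H`-norm `|u|_H = (∑_{n ≥ 1} |u_n|²)^{1/2}`. -/
def normH (u : ℕ → ℂ) : ℝ := Real.sqrt (∑' n : ℕ, ‖u (n + 1)‖ ^ 2)

/-- Membership in `V`: `u ∈ H` and `∑_{n ≥ 1} k_n² |u_n|² < ∞`. -/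
def memV (k₀ : ℝ) (u : ℕ → ℂ) : Prop :=
  memH u ∧ Summable (fun n : ℕ => (kseq k₀ (n + 1)) ^ 2 * ‖u (n + 1)‖ ^ 2)

/-- The `V`-norm `‖u‖_V = (∑_{n ≥ 1} k_n² |u_n|²)^{1/2}`. -/
def normV (k₀ : ℝ) (u : ℕ → ℂ) : ℝ :=
  Real.sqrt (∑' n : ℕ, (kseq k₀ (n + 1)) ^ 2 * ‖u (n + 1)‖ ^ 2)

lemma ext_coe (f : ℕ → ℂ) (j : ℕ) (hj : 1 ≤ j) : ext f ((j : ℤ)) = f j := by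
  unfold ext
  rw [if_pos (by exact_mod_cast hj)]
  simp

lemma kseq_pos {k₀ : ℝ} (hk₀ : 0 < k₀) (j : ℤ) : 0 < kseq k₀ j :=
  mul_pos hk₀ (zpow_pos two_pos j)

lemma kseq_succ (k₀ : ℝ) (j : ℤ) : kseq k₀ (j + 1) = 2 * kseq k₀ j := by
  unfold kseq
  rw [zpow_add_one₀ (two_ne_zero)]
  ring

/-- There is `C > 0` such that for every `u ∈ V` and `v ∈ H`, `B(u,v) ∈ H` and
`|B(u,v)|_H ≤ C ‖u‖_V |v|_H`, where `B` is the GOY bilinear operator. -/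
theorem goy_estimate_VH (k₀ : ℝ) (hk₀ : 0 < k₀) :
    ∃ C : ℝ, 0 < C ∧ ∀ u v : ℕ → ℂ, memV k₀ u → memH v →
      memH (goyB k₀ u v) ∧ normH (goyB k₀ u v) ≤ C * normV k₀ u * normH v := by
  refine ⟨1, one_pos, ?_⟩
  intro u v hu hv
  obtain ⟨huH, huV⟩ := hu
  set Mn := normH v with hMdef
  have hMnn : 0 ≤ Mn := Real.sqrt_nonneg _
  have hvsum : Summable (fun n : ℕ => ‖v (n + 1)‖ ^ 2) := hv
  have htsum_v_nn : (0:ℝ) ≤ ∑' n : ℕ, ‖v (n + 1)‖ ^ 2 :=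
    tsum_nonneg (fun n => sq_nonneg _)
  -- every extended coordinate of v is bounded by Mn
  have hM : ∀ m : ℤ, ‖ext v m‖ ≤ Mn := by
    intro m
    by_cases hm : 1 ≤ m
    · have : ext v m = v m.toNat := by unfold ext; rw [if_pos hm]
      rw [this]
      obtain ⟨j, hj⟩ : ∃ j : ℕ, m.toNat = j + 1 := by
        refine ⟨m.toNat - 1, ?_⟩
        have : 1 ≤ m.toNat := by omega
        omega
      rw [hj]
      refine (Real.le_sqrt (norm_nonneg _) htsum_v_nn).mpr ?_
      exact Summable.le_tsum hvsum j (fun i _ => sq_nonneg _)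
    · have : ext v m = 0 := by unfold ext; rw [if_neg hm]
      rw [this, norm_zero]; exact hMnn
  -- weighted sequence
  set w : ℕ → ℝ := fun j => kseq k₀ (j : ℤ) * ‖ext u (j : ℤ)‖ with hwdef
  have hwnn : ∀ j, 0 ≤ w j := fun j =>
    mul_nonneg (kseq_pos hk₀ _).le (norm_nonneg _)
  set f : ℕ → ℝ := fun j => w j ^ 2 with hfdef
  have hfnn : ∀ j, 0 ≤ f j := fun j => sq_nonneg _
  have hfW : ∀ n : ℕ, f (n + 1) = (kseq k₀ ((n : ℤ) + 1)) ^ 2 * ‖u (n + 1)‖ ^ 2 := by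
    intro n
    have h1 : ext u ((n : ℤ) + 1) = u (n + 1) := by
      rw [show ((n : ℤ) + 1) = ((n + 1 : ℕ) : ℤ) by push_cast; ring]
      exact ext_coe u (n + 1) (by omega)
    simp only [hfdef, hwdef]
    push_cast
    rw [h1]
    ring
  have hfsum1 : Summable (fun n : ℕ => f (n + 1)) := by
    refine huV.congr fun n => ?_
    rw [hfW n]
  have hfsum : Summable f := (summable_nat_add_iff 1).mp hfsum1
  have hf0 : f 0 = 0 := by
    have : ext u (0 : ℤ) = 0 := by unfold ext; norm_num
    simp [hfdef, hwdef, this]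
  set S2 := ∑' n : ℕ, f (n + 1) with hS2def
  have hS2nn : 0 ≤ S2 := tsum_nonneg fun n => hfnn _
  have htot : ∑' n, f n = S2 := by
    rw [Summable.tsum_eq_zero_add hfsum, hf0, zero_add]
  have hshift : ∀ k : ℕ, (Summable fun n => f (n + k)) ∧ (∑' n, f (n + k)) ≤ S2 := by
    intro k
    have hs : Summable fun n => f (n + k) := (summable_nat_add_iff k).mpr hfsum
    refine ⟨hs, ?_⟩
    have := Summable.sum_add_tsum_nat_add k hfsum
    have hpart : (0:ℝ) ≤ ∑ i ∈ Finset.range k, f i :=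
      Finset.sum_nonneg fun i _ => hfnn i
    rw [htot] at this
    linarith
  -- pointwise bound
  have hpt : ∀ n : ℕ, ‖goyB k₀ u v (n + 1)‖ ≤
      Mn * (3/8 * w (n + 2) + 1/8 * w (n + 3) + 1/4 * w n) := by
    intro n
    set K := kseq k₀ (((n + 1 : ℕ) : ℤ)) with hKdef
    have hKpos : 0 < K := kseq_pos hk₀ _
    set A := ext v (((n+1:ℕ) : ℤ) - 1)
    set B := ext u (((n+1:ℕ) : ℤ) + 1) with hBdef
    set Cc := ext v (((n+1:ℕ) : ℤ) + 2)
    set D := ext v (((n+1:ℕ) : ℤ) + 1)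
    set Ee := ext u (((n+1:ℕ) : ℤ) + 2) with hEdef
    set F := ext u (((n+1:ℕ) : ℤ) - 1) with hFdef
    set G := ext v (((n+1:ℕ) : ℤ) - 2)
    have hval : goyB k₀ u v (n+1) = Complex.I * (K : ℂ) *
        ((1/4 : ℂ) * conj A * conj B
          - (1/2 : ℂ) * (conj B * conj Cc + conj D * conj Ee)
          + (1/8 : ℂ) * conj F * conj G) := rfl
    have hnorm : ‖goyB k₀ u v (n+1)‖ = K * ‖(1/4 : ℂ) * conj A * conj B
          - (1/2 : ℂ) * (conj B * conj Cc + conj D * conj Ee)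
          + (1/8 : ℂ) * conj F * conj G‖ := by
      rw [hval]
      simp [norm_mul, abs_of_pos hKpos]
    have hE : ‖(1/4 : ℂ) * conj A * conj B
          - (1/2 : ℂ) * (conj B * conj Cc + conj D * conj Ee)
          + (1/8 : ℂ) * conj F * conj G‖ ≤
        1/4 * (‖A‖ * ‖B‖) + 1/2 * (‖B‖ * ‖Cc‖ + ‖D‖ * ‖Ee‖) + 1/8 * (‖F‖ * ‖G‖) := by
      have h1 := norm_add_le ((1/4 : ℂ) * conj A * conj B
          - (1/2 : ℂ) * (conj B * conj Cc + conj D * conj Ee))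
          ((1/8 : ℂ) * conj F * conj G)
      have h2 := norm_sub_le ((1/4 : ℂ) * conj A * conj B)
          ((1/2 : ℂ) * (conj B * conj Cc + conj D * conj Ee))
      have h3 := norm_add_le (conj B * conj Cc) (conj D * conj Ee)
      have e1 : ‖(1/4 : ℂ) * conj A * conj B‖ = 1/4 * (‖A‖ * ‖B‖) := by
        rw [norm_mul, norm_mul, RCLike.norm_conj, RCLike.norm_conj,
          show ‖(1/4 : ℂ)‖ = 1/4 from by norm_num]
        ring
      have e2 : ‖(1/8 : ℂ) * conj F * conj G‖ = 1/8 * (‖F‖ * ‖G‖) := by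
        rw [norm_mul, norm_mul, RCLike.norm_conj, RCLike.norm_conj,
          show ‖(1/8 : ℂ)‖ = 1/8 from by norm_num]
        ring
      have e3 : ‖(1/2 : ℂ) * (conj B * conj Cc + conj D * conj Ee)‖ ≤
          1/2 * (‖B‖ * ‖Cc‖ + ‖D‖ * ‖Ee‖) := by
        rw [norm_mul]
        have : ‖(1/2 : ℂ)‖ = 1/2 := by norm_num
        rw [this]
        have h4 : ‖conj B * conj Cc + conj D * conj Ee‖ ≤ ‖B‖ * ‖Cc‖ + ‖D‖ * ‖Ee‖ := by
          refine h3.trans ?_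
          simp [norm_mul, RCLike.norm_conj]
        linarith
      calc _ ≤ ‖(1/4 : ℂ) * conj A * conj B
              - (1/2 : ℂ) * (conj B * conj Cc + conj D * conj Ee)‖
              + ‖(1/8 : ℂ) * conj F * conj G‖ := h1
        _ ≤ ‖(1/4 : ℂ) * conj A * conj B‖
              + ‖(1/2 : ℂ) * (conj B * conj Cc + conj D * conj Ee)‖
              + ‖(1/8 : ℂ) * conj F * conj G‖ := by linarith
        _ ≤ 1/4 * (‖A‖ * ‖B‖) + 1/2 * (‖B‖ * ‖Cc‖ + ‖D‖ * ‖Ee‖) + 1/8 * (‖F‖ * ‖G‖) := by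
            rw [e1, e2]; linarith
    -- relations between K‖·‖ and w
    have hwB : K * ‖B‖ = w (n + 2) / 2 := by
      have hc : ((n + 2 : ℕ) : ℤ) = ((n + 1 : ℕ) : ℤ) + 1 := by push_cast; ring
      have hx : w (n + 2) = kseq k₀ (((n + 1 : ℕ) : ℤ) + 1) * ‖B‖ := by
        simp only [hwdef]; rw [hc]
      rw [hx, kseq_succ]; ring
    have hwE : K * ‖Ee‖ = w (n + 3) / 4 := by
      have hc : ((n + 3 : ℕ) : ℤ) = ((n + 1 : ℕ) : ℤ) + 2 := by push_cast; ring
      have hx : w (n + 3) = kseq k₀ (((n + 1 : ℕ) : ℤ) + 2) * ‖Ee‖ := by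
        simp only [hwdef]; rw [hc]
      have hk4 : kseq k₀ (((n + 1 : ℕ) : ℤ) + 2) = 4 * K := by
        rw [show (((n + 1 : ℕ) : ℤ) + 2) = (((n + 1 : ℕ) : ℤ) + 1) + 1 by ring,
          kseq_succ, kseq_succ]
        ring
      rw [hx, hk4]; ring
    have hwF : K * ‖F‖ = 2 * w n := by
      have hc : ((n : ℕ) : ℤ) = ((n + 1 : ℕ) : ℤ) - 1 := by push_cast; ring
      have hx : w n = kseq k₀ (((n + 1 : ℕ) : ℤ) - 1) * ‖F‖ := by
        simp only [hwdef]; rw [hc]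
      have hk2 : K = 2 * kseq k₀ (((n + 1 : ℕ) : ℤ) - 1) := by
        have h := kseq_succ k₀ (((n + 1 : ℕ) : ℤ) - 1)
        rw [sub_add_cancel] at h
        exact h
      rw [hx, hk2]; ring
    have hA := hM (((n+1:ℕ) : ℤ) - 1)
    have hC := hM (((n+1:ℕ) : ℤ) + 2)
    have hD := hM (((n+1:ℕ) : ℤ) + 1)
    have hG := hM (((n+1:ℕ) : ℤ) - 2)
    rw [hnorm]
    refine le_trans (mul_le_mul_of_nonneg_left hE hKpos.le) ?_
    calc K * (1/4 * (‖A‖ * ‖B‖) + 1/2 * (‖B‖ * ‖Cc‖ + ‖D‖ * ‖Ee‖) + 1/8 * (‖F‖ * ‖G‖))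
        ≤ K * (1/4 * (Mn * ‖B‖) + 1/2 * (‖B‖ * Mn + Mn * ‖Ee‖) + 1/8 * (‖F‖ * Mn)) := by
          refine mul_le_mul_of_nonneg_left ?_ hKpos.le
          gcongr
      _ = Mn * (3/4 * (K * ‖B‖) + 1/2 * (K * ‖Ee‖) + 1/8 * (K * ‖F‖)) := by ring
      _ = Mn * (3/8 * w (n + 2) + 1/8 * w (n + 3) + 1/4 * w n) := by
          rw [hwB, hwE, hwF]; ring
  -- squared pointwise bound
  set g : ℕ → ℝ := fun n => Mn ^ 2 * (27/64 * f (n + 2) + 3/64 * f (n + 3) + 3/16 * f n)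
    with hgdef
  have hpt2 : ∀ n : ℕ, ‖goyB k₀ u v (n + 1)‖ ^ 2 ≤ g n := by
    intro n
    have h1 := hpt n
    have hBn : 0 ≤ ‖goyB k₀ u v (n + 1)‖ := norm_nonneg _
    have h2 : ‖goyB k₀ u v (n + 1)‖ ^ 2 ≤
        (Mn * (3/8 * w (n + 2) + 1/8 * w (n + 3) + 1/4 * w n)) ^ 2 :=
      pow_le_pow_left₀ hBn h1 2
    refine h2.trans ?_
    simp only [hgdef, hfdef]
    nlinarith [mul_nonneg (sq_nonneg Mn) (sq_nonneg (3 * w (n+2) - w (n+3))),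
      mul_nonneg (sq_nonneg Mn) (sq_nonneg (3 * w (n+2) - 2 * w n)),
      mul_nonneg (sq_nonneg Mn) (sq_nonneg (w (n+3) - 2 * w n))]
  have hg2 : Summable fun n => f (n + 2) := (hshift 2).1
  have hg3 : Summable fun n => f (n + 3) := (hshift 3).1
  have hg0 : Summable f := hfsum
  have hgsum : Summable g := by
    apply Summable.mul_left
    exact ((hg2.mul_left _).add (hg3.mul_left _)).add (hg0.mul_left _)
  have hBsum : Summable (fun n : ℕ => ‖goyB k₀ u v (n + 1)‖ ^ 2) :=
    Summable.of_nonneg_of_le (fun n => sq_nonneg _) hpt2 hgsum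
  refine ⟨hBsum, ?_⟩
  have htle : (∑' n : ℕ, ‖goyB k₀ u v (n + 1)‖ ^ 2) ≤ ∑' n, g n :=
    Summable.tsum_le_tsum hpt2 hBsum hgsum
  have hgt : (∑' n, g n) ≤ Mn ^ 2 * S2 := by
    have e : (∑' n, g n) = Mn ^ 2 * ((27/64) * (∑' n, f (n + 2))
        + ((3/64) * (∑' n, f (n + 3)) + (3/16) * (∑' n, f n))) := by
      rw [hgdef]
      rw [tsum_mul_left]
      congr 1
      rw [Summable.tsum_add ((hg2.mul_left _).add (hg3.mul_left _)) (hg0.mul_left _),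
        Summable.tsum_add (hg2.mul_left _) (hg3.mul_left _), tsum_mul_left, tsum_mul_left,
        tsum_mul_left]
      ring
    rw [e]
    have t2 := (hshift 2).2
    have t3 := (hshift 3).2
    have t0 : (∑' n, f n) ≤ S2 := le_of_eq htot
    nlinarith [sq_nonneg Mn]
  have hfinal : (∑' n : ℕ, ‖goyB k₀ u v (n + 1)‖ ^ 2) ≤ Mn ^ 2 * S2 := htle.trans hgt
  have hnv : normV k₀ u = Real.sqrt S2 := by
    unfold normV
    congr 1
    exact tsum_congr fun n => (hfW n).symm
  unfold normH
  rw [one_mul, hnv]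
  calc Real.sqrt (∑' n : ℕ, ‖goyB k₀ u v (n + 1)‖ ^ 2) ≤ Real.sqrt (Mn ^ 2 * S2) :=
        Real.sqrt_le_sqrt hfinal
    _ = Mn * Real.sqrt S2 := by
        rw [Real.sqrt_mul (sq_nonneg Mn), Real.sqrt_sq hMnn]
    _ = Real.sqrt S2 * Mn := mul_comm _ _

end
end

section
/- For the GOY bilinear operator B, one has the skew-symmetry identity ⟨B(u,v), w⟩_H = −⟨B(u,w), v⟩_H for all u ∈ V and v, w ∈ H, and also for all v, w ∈ V and u ∈ H. -/
open ComplexConjugate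

noncomputable section

/-- The real inner product of `H`: `⟨u,v⟩_H = Re ∑_{n ≥ 1} u_n conj(v_n)`. -/
def innerH (u v : ℕ → ℂ) : ℝ := ∑' n : ℕ, (u (n + 1) * conj (v (n + 1))).re

namespace GoyAux

def T (k₀ : ℝ) (c : ℂ) (x y z : ℕ → ℂ) (p q : ℤ) : ℤ → ℂ := fun m =>
  Complex.I * (kseq k₀ m : ℂ) * c * conj (ext x (m + p)) * conj (ext y (m + q)) *
    conj (ext z m)

lemma ext_ofNat (x : ℕ → ℂ) (n : ℕ) : ext x ((n : ℤ) + 1) = x (n + 1) := by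
  unfold ext
  rw [if_pos (by omega), show ((n:ℤ)+1).toNat = n+1 from by omega]

lemma ext_zero (x : ℕ → ℂ) {m : ℤ} (hm : m ≤ 0) : ext x m = 0 := by
  simp [ext, show ¬ (1 : ℤ) ≤ m by omega]

lemma kseq_pos {k₀ : ℝ} (hk₀ : 0 < k₀) (m : ℤ) : 0 < kseq k₀ m := by
  unfold kseq; positivity

lemma kseq_add_one (k₀ : ℝ) (m : ℤ) : kseq k₀ (m + 1) = 2 * kseq k₀ m := by
  unfold kseq
  rw [zpow_add_one₀ (two_ne_zero)]
  ring

lemma kseq_le {k₀ : ℝ} (hk₀ : 0 < k₀) (m a : ℤ) (ha : -2 ≤ a) :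
    kseq k₀ m ≤ 4 * kseq k₀ (m + a) := by
  unfold kseq
  rw [zpow_add₀ (two_ne_zero)]
  have h1 : (1/4 : ℝ) ≤ 2 ^ a := by
    calc (1/4 : ℝ) = 2 ^ (-2 : ℤ) := by norm_num
    _ ≤ 2 ^ a := zpow_le_zpow_right₀ one_le_two ha
  have h2 : (0 : ℝ) < 2 ^ m := by positivity
  nlinarith [mul_le_mul_of_nonneg_left (by linarith : (1:ℝ)/4 ≤ 2 ^ a)
    (le_of_lt (mul_pos hk₀ h2))]

lemma norm_T {k₀ : ℝ} (hk₀ : 0 < k₀) (c : ℂ) (x y z : ℕ → ℂ) (p q m : ℤ) :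
    ‖T k₀ c x y z p q m‖ =
      ‖c‖ * (kseq k₀ m * (‖ext x (m + p)‖ * (‖ext y (m + q)‖ * ‖ext z m‖))) := by
  simp only [T, norm_mul, Complex.norm_I, RCLike.norm_conj, Complex.norm_real,
    Real.norm_eq_abs, abs_of_pos (kseq_pos hk₀ m)]
  ring

lemma T_zero {k₀ : ℝ} (c : ℂ) (x y z : ℕ → ℂ) (p q : ℤ) {m : ℤ} (hm : m ≤ 0) :
    T k₀ c x y z p q m = 0 := by
  simp [T, ext_zero z hm]


lemma memH_z {x : ℕ → ℂ} (hx : memH x) : Summable fun m : ℤ => ‖ext x m‖ ^ 2 := by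
  apply Summable.of_nat_of_neg_add_one
  · apply (summable_nat_add_iff 1).mp
    apply hx.congr
    intro n
    rw [show ((n + 1 : ℕ) : ℤ) = (n : ℤ) + 1 by push_cast; ring, ext_ofNat]
  · apply summable_zero.congr
    intro n
    rw [ext_zero x (by omega : (-((n : ℤ) + 1)) ≤ 0)]
    simp

lemma memV_z {k₀ : ℝ} {x : ℕ → ℂ} (hx : memV k₀ x) :
    Summable fun m : ℤ => (kseq k₀ m * ‖ext x m‖) ^ 2 := by
  apply Summable.of_nat_of_neg_add_one
  · apply (summable_nat_add_iff 1).mp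
    apply hx.2.congr
    intro n
    rw [show ((n + 1 : ℕ) : ℤ) = (n : ℤ) + 1 by push_cast; ring, ext_ofNat, mul_pow]
  · apply summable_zero.congr
    intro n
    rw [ext_zero x (by omega : (-((n : ℤ) + 1)) ≤ 0)]
    simp

lemma ext_bound {x : ℕ → ℂ} (hx : memH x) (m : ℤ) :
    ‖ext x m‖ ≤ Real.sqrt (∑' m : ℤ, ‖ext x m‖ ^ 2) := by
  have hs := memH_z hx
  have h1 : ‖ext x m‖ ^ 2 ≤ ∑' m : ℤ, ‖ext x m‖ ^ 2 :=
    Summable.le_tsum hs m (fun j _ => by positivity)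
  calc ‖ext x m‖ = Real.sqrt (‖ext x m‖ ^ 2) := by
        rw [Real.sqrt_sq (norm_nonneg _)]
    _ ≤ _ := Real.sqrt_le_sqrt h1

lemma summable_shift {F : ℤ → ℝ} (hF : Summable F) (a : ℤ) :
    Summable fun m => F (m + a) :=
  (Equiv.addRight a).summable_iff.2 hF

lemma core {k₀ : ℝ} (hk₀ : 0 < k₀) {f g h : ℤ → ℝ} {M : ℝ}
    (hf0 : ∀ m, 0 ≤ f m) (hg0 : ∀ m, 0 ≤ g m) (hh0 : ∀ m, 0 ≤ h m) (hM : ∀ m, h m ≤ M)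
    (hf : Summable fun m => (kseq k₀ m * f m) ^ 2) (hg : Summable fun m => g m ^ 2)
    (a b e : ℤ) (ha : -2 ≤ a) :
    Summable fun m => kseq k₀ m * (f (m + a) * (g (m + b) * h (m + e))) := by
  have hM0 : 0 ≤ M := le_trans (hh0 0) (hM 0)
  have hfa : Summable fun m => (kseq k₀ (m + a) * f (m + a)) ^ 2 :=
    summable_shift (F := fun m => (kseq k₀ m * f m) ^ 2) hf a
  have hgb : Summable fun m => g (m + b) ^ 2 :=
    summable_shift (F := fun m => g m ^ 2) hg b
  apply Summable.of_nonneg_of_le (f := fun m =>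
      2 * M * ((kseq k₀ (m + a) * f (m + a)) ^ 2 + g (m + b) ^ 2))
  · intro m
    exact mul_nonneg (kseq_pos hk₀ m).le (mul_nonneg (hf0 _) (mul_nonneg (hg0 _) (hh0 _)))
  · intro m
    have h1 : kseq k₀ m ≤ 4 * kseq k₀ (m + a) := kseq_le hk₀ m a ha
    have h2 : h (m + e) ≤ M := hM _
    have h3 : kseq k₀ m * f (m + a) ≤ 4 * (kseq k₀ (m + a) * f (m + a)) := by
      have := mul_le_mul_of_nonneg_right h1 (hf0 (m + a)); linarith
    have h4 : 2 * (kseq k₀ (m + a) * f (m + a)) * g (m + b) ≤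
        (kseq k₀ (m + a) * f (m + a)) ^ 2 + g (m + b) ^ 2 := two_mul_le_add_sq _ _
    have h5 : 0 ≤ kseq k₀ (m + a) * f (m + a) :=
      mul_nonneg (le_of_lt (kseq_pos hk₀ _)) (hf0 _)
    calc kseq k₀ m * (f (m + a) * (g (m + b) * h (m + e)))
        = (kseq k₀ m * f (m + a)) * g (m + b) * h (m + e) := by ring
      _ ≤ (kseq k₀ m * f (m + a)) * g (m + b) * M := by
          have hX : 0 ≤ kseq k₀ m * f (m + a) * g (m + b) :=
            mul_nonneg (mul_nonneg (kseq_pos hk₀ m).le (hf0 _)) (hg0 _)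
          exact mul_le_mul_of_nonneg_left h2 hX
      _ ≤ (4 * (kseq k₀ (m + a) * f (m + a))) * g (m + b) * M := by
          apply mul_le_mul_of_nonneg_right (mul_le_mul_of_nonneg_right h3 (hg0 _)) hM0
      _ = 2 * M * (2 * (kseq k₀ (m + a) * f (m + a)) * g (m + b)) := by ring
      _ ≤ 2 * M * ((kseq k₀ (m + a) * f (m + a)) ^ 2 + g (m + b) ^ 2) := by
          apply mul_le_mul_of_nonneg_left h4 (by linarith)
  · exact (hfa.add hgb).mul_left (2 * M)

lemma summable_T_ky {k₀ : ℝ} (hk₀ : 0 < k₀) (c : ℂ) (x y z : ℕ → ℂ) (p q : ℤ)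
    (hq : -2 ≤ q)
    (hy : Summable fun m : ℤ => (kseq k₀ m * ‖ext y m‖) ^ 2)
    (hz : Summable fun m : ℤ => ‖ext z m‖ ^ 2)
    {M : ℝ} (hxM : ∀ m : ℤ, ‖ext x m‖ ≤ M) :
    Summable fun m : ℤ => ‖T k₀ c x y z p q m‖ := by
  have hcore := core hk₀ (fun m => norm_nonneg (ext y m)) (fun m => norm_nonneg (ext z m))
    (fun m => norm_nonneg (ext x m)) hxM hy hz q 0 p hq
  apply (hcore.mul_left ‖c‖).congr
  intro m
  rw [norm_T hk₀]
  simp only [add_zero]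
  ring

lemma summable_T_kx {k₀ : ℝ} (hk₀ : 0 < k₀) (c : ℂ) (x y z : ℕ → ℂ) (p q : ℤ)
    (hp : -2 ≤ p)
    (hx : Summable fun m : ℤ => (kseq k₀ m * ‖ext x m‖) ^ 2)
    (hz : Summable fun m : ℤ => ‖ext z m‖ ^ 2)
    {M : ℝ} (hyM : ∀ m : ℤ, ‖ext y m‖ ≤ M) :
    Summable fun m : ℤ => ‖T k₀ c x y z p q m‖ := by
  have hcore := core hk₀ (fun m => norm_nonneg (ext x m)) (fun m => norm_nonneg (ext z m))
    (fun m => norm_nonneg (ext y m)) hyM hx hz p 0 q hp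
  apply (hcore.mul_left ‖c‖).congr
  intro m
  rw [norm_T hk₀]
  simp only [add_zero]
  ring

lemma pow_shift (m d : ℤ) : (2:ℝ) ^ m = 2 ^ (m - d) * 2 ^ d := by
  rw [← zpow_add₀ (two_ne_zero : (2:ℝ) ≠ 0), show m - d + d = m from by ring]

lemma pair16 (k₀ : ℝ) (u v w : ℕ → ℂ) (m : ℤ) :
    T k₀ (1/4) v u w (-1) 1 m = - T k₀ (-1/2) w u v 1 2 (m - 1) := by
  have hk : kseq k₀ m = 2 * kseq k₀ (m - 1) := by
    unfold kseq; rw [pow_shift m 1]; norm_num; ring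
  simp only [T, show m - 1 + 1 = m from by ring, show m - 1 + 2 = m + 1 from by ring,
    show m + -1 = m - 1 from by ring, hk]
  push_cast
  ring

lemma pair25 (k₀ : ℝ) (u v w : ℕ → ℂ) (m : ℤ) :
    T k₀ (1/4) w u v (-1) 1 m = - T k₀ (-1/2) v u w 1 2 (m - 1) := by
  have hk : kseq k₀ m = 2 * kseq k₀ (m - 1) := by
    unfold kseq; rw [pow_shift m 1]; norm_num; ring
  simp only [T, show m - 1 + 1 = m from by ring, show m - 1 + 2 = m + 1 from by ring,
    show m + -1 = m - 1 from by ring, hk]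
  push_cast
  ring

lemma pair83 (k₀ : ℝ) (u v w : ℕ → ℂ) (m : ℤ) :
    T k₀ (1/8) u w v (-1) (-2) m = - T k₀ (-1/2) u v w 1 2 (m - 2) := by
  have hk : kseq k₀ m = 4 * kseq k₀ (m - 2) := by
    unfold kseq; rw [pow_shift m 2]; norm_num; ring
  simp only [T, show m - 2 + 1 = m - 1 from by ring, show m - 2 + 2 = m from by ring,
    show m + -1 = m - 1 from by ring, show m + -2 = m - 2 from by ring, hk]
  push_cast
  ring

lemma pair74 (k₀ : ℝ) (u v w : ℕ → ℂ) (m : ℤ) :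
    T k₀ (1/8) u v w (-1) (-2) m = - T k₀ (-1/2) u w v 1 2 (m - 2) := by
  have hk : kseq k₀ m = 4 * kseq k₀ (m - 2) := by
    unfold kseq; rw [pow_shift m 2]; norm_num; ring
  simp only [T, show m - 2 + 1 = m - 1 from by ring, show m - 2 + 2 = m from by ring,
    show m + -1 = m - 1 from by ring, show m + -2 = m - 2 from by ring, hk]
  push_cast
  ring

lemma tsum_shiftz (g : ℤ → ℂ) (d : ℤ) : ∑' m, g (m - d) = ∑' m, g m :=
  (Equiv.subRight d).tsum_eq g

lemma tsum_pair {f g : ℤ → ℂ} (d : ℤ) (hfg : ∀ m, f m = - g (m - d)) :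
    (∑' m, f m) + (∑' m, g m) = 0 := by
  calc (∑' m, f m) + ∑' m, g m
      = (∑' m, - g (m - d)) + ∑' m, g m := by rw [tsum_congr hfg]
    _ = - (∑' m, g (m - d)) + ∑' m, g m := by rw [tsum_neg]
    _ = 0 := by rw [tsum_shiftz]; ring

lemma goyB_mul (k₀ : ℝ) (u v w : ℕ → ℂ) (n : ℕ) :
    goyB k₀ u v (n + 1) * conj (w (n + 1)) =
      T k₀ (1/4) v u w (-1) 1 ((n : ℤ) + 1) + T k₀ (-1/2) u v w 1 2 ((n : ℤ) + 1) +
      T k₀ (-1/2) v u w 1 2 ((n : ℤ) + 1) + T k₀ (1/8) u v w (-1) (-2) ((n : ℤ) + 1) := by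
  rw [← ext_ofNat w n]
  simp only [goyB, T]
  push_cast
  simp only [show (n:ℤ) + 1 + -1 = (n:ℤ) + 1 - 1 from by ring,
    show (n:ℤ) + 1 + -2 = (n:ℤ) + 1 - 2 from by ring]
  ring

lemma tsum_nat_of_zero (F : ℤ → ℝ) (hF : Summable F) (h0 : ∀ m : ℤ, m ≤ 0 → F m = 0) :
    ∑' n : ℕ, F ((n : ℤ) + 1) = ∑' m : ℤ, F m := by
  have h1 : Summable fun n : ℕ => F n := hF.comp_injective Nat.cast_injective
  have h2 : Summable fun n : ℕ => F (-((n : ℤ) + 1)) := by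
    apply summable_zero.congr
    intro n
    exact (h0 _ (by omega)).symm
  rw [tsum_of_nat_of_neg_add_one h1 h2]
  have h3 : ∑' n : ℕ, F (-((n : ℤ) + 1)) = 0 := by
    rw [tsum_congr (fun n : ℕ => h0 (-((n:ℤ)+1)) (by omega))]
    exact tsum_zero
  have h4 : F ((0:ℕ):ℤ) = 0 := by simpa using h0 0 le_rfl
  rw [h3, add_zero, Summable.tsum_eq_zero_add h1, h4, zero_add]
  exact tsum_congr fun n => by rw [show ((n+1:ℕ):ℤ) = (n:ℤ)+1 by push_cast; ring]

lemma main {k₀ : ℝ} (hk₀ : 0 < k₀) (u v w : ℕ → ℂ)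
    (S1 : Summable fun m : ℤ => ‖T k₀ (1/4) v u w (-1) 1 m‖)
    (S2 : Summable fun m : ℤ => ‖T k₀ (1/4) w u v (-1) 1 m‖)
    (S3 : Summable fun m : ℤ => ‖T k₀ (-1/2) u v w 1 2 m‖)
    (S4 : Summable fun m : ℤ => ‖T k₀ (-1/2) u w v 1 2 m‖)
    (S5 : Summable fun m : ℤ => ‖T k₀ (-1/2) v u w 1 2 m‖)
    (S6 : Summable fun m : ℤ => ‖T k₀ (-1/2) w u v 1 2 m‖)
    (S7 : Summable fun m : ℤ => ‖T k₀ (1/8) u v w (-1) (-2) m‖)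
    (S8 : Summable fun m : ℤ => ‖T k₀ (1/8) u w v (-1) (-2) m‖) :
    innerH (goyB k₀ u v) w = - innerH (goyB k₀ u w) v := by
  have hA1 := S1.of_norm
  have hA2 := S2.of_norm
  have hA3 := S3.of_norm
  have hA4 := S4.of_norm
  have hA5 := S5.of_norm
  have hA6 := S6.of_norm
  have hA7 := S7.of_norm
  have hA8 := S8.of_norm
  have hP : Summable (fun m : ℤ => T k₀ (1/4) v u w (-1) 1 m + T k₀ (-1/2) u v w 1 2 m +
      T k₀ (-1/2) v u w 1 2 m + T k₀ (1/8) u v w (-1) (-2) m) :=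
    ((hA1.add hA3).add hA5).add hA7
  have hQ : Summable (fun m : ℤ => T k₀ (1/4) w u v (-1) 1 m + T k₀ (-1/2) u w v 1 2 m +
      T k₀ (-1/2) w u v 1 2 m + T k₀ (1/8) u w v (-1) (-2) m) :=
    ((hA2.add hA4).add hA6).add hA8
  have step1 : innerH (goyB k₀ u v) w = (∑' m : ℤ, (T k₀ (1/4) v u w (-1) 1 m +
      T k₀ (-1/2) u v w 1 2 m + T k₀ (-1/2) v u w 1 2 m +
      T k₀ (1/8) u v w (-1) (-2) m)).re := by
    unfold innerH
    rw [Complex.re_tsum hP]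
    rw [← tsum_nat_of_zero _ ((Complex.hasSum_re hP.hasSum).summable)
      (fun m hm => by rw [T_zero _ _ _ _ _ _ hm, T_zero _ _ _ _ _ _ hm,
        T_zero _ _ _ _ _ _ hm, T_zero _ _ _ _ _ _ hm]; simp)]
    exact tsum_congr (fun n => by rw [goyB_mul])
  have step2 : innerH (goyB k₀ u w) v = (∑' m : ℤ, (T k₀ (1/4) w u v (-1) 1 m +
      T k₀ (-1/2) u w v 1 2 m + T k₀ (-1/2) w u v 1 2 m +
      T k₀ (1/8) u w v (-1) (-2) m)).re := by
    unfold innerH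
    rw [Complex.re_tsum hQ]
    rw [← tsum_nat_of_zero _ ((Complex.hasSum_re hQ.hasSum).summable)
      (fun m hm => by rw [T_zero _ _ _ _ _ _ hm, T_zero _ _ _ _ _ _ hm,
        T_zero _ _ _ _ _ _ hm, T_zero _ _ _ _ _ _ hm]; simp)]
    exact tsum_congr (fun n => by rw [goyB_mul])
  have e16 := tsum_pair 1 (pair16 k₀ u v w)
  have e25 := tsum_pair 1 (pair25 k₀ u v w)
  have e83 := tsum_pair 2 (pair83 k₀ u v w)
  have e74 := tsum_pair 2 (pair74 k₀ u v w)
  have hPQ : (∑' m : ℤ, (T k₀ (1/4) v u w (-1) 1 m + T k₀ (-1/2) u v w 1 2 m +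
      T k₀ (-1/2) v u w 1 2 m + T k₀ (1/8) u v w (-1) (-2) m)) +
      (∑' m : ℤ, (T k₀ (1/4) w u v (-1) 1 m + T k₀ (-1/2) u w v 1 2 m +
      T k₀ (-1/2) w u v 1 2 m + T k₀ (1/8) u w v (-1) (-2) m)) = 0 := by
    rw [Summable.tsum_add ((hA1.add hA3).add hA5) hA7, Summable.tsum_add (hA1.add hA3) hA5, Summable.tsum_add hA1 hA3,
      Summable.tsum_add ((hA2.add hA4).add hA6) hA8, Summable.tsum_add (hA2.add hA4) hA6, Summable.tsum_add hA2 hA4]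
    linear_combination e16 + e25 + e83 + e74
  have key : innerH (goyB k₀ u v) w + innerH (goyB k₀ u w) v = 0 := by
    rw [step1, step2, ← Complex.add_re, hPQ, Complex.zero_re]
  linarith

end GoyAux

/-- Skew-symmetry: `⟨B(u,v), w⟩_H = −⟨B(u,w), v⟩_H` for all `u ∈ V`, `v, w ∈ H`,
and also for all `v, w ∈ V`, `u ∈ H`, for the GOY bilinear operator `B`. -/
theorem goy_skew_symmetry (k₀ : ℝ) (hk₀ : 0 < k₀) (u v w : ℕ → ℂ)
    (h : (memV k₀ u ∧ memH v ∧ memH w) ∨ (memV k₀ v ∧ memV k₀ w ∧ memH u)) :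
    innerH (goyB k₀ u v) w = - innerH (goyB k₀ u w) v := by
  rcases h with ⟨hu, hv, hw⟩ | ⟨hv, hw, hu⟩
  · have SVu := GoyAux.memV_z hu
    have SHv := GoyAux.memH_z hv
    have SHw := GoyAux.memH_z hw
    have Bv := GoyAux.ext_bound hv
    have Bw := GoyAux.ext_bound hw
    exact GoyAux.main hk₀ u v w
      (GoyAux.summable_T_ky hk₀ (1/4) v u w (-1) 1 (by norm_num) SVu SHw Bv)
      (GoyAux.summable_T_ky hk₀ (1/4) w u v (-1) 1 (by norm_num) SVu SHv Bw)
      (GoyAux.summable_T_kx hk₀ (-1/2) u v w 1 2 (by norm_num) SVu SHw Bv)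
      (GoyAux.summable_T_kx hk₀ (-1/2) u w v 1 2 (by norm_num) SVu SHv Bw)
      (GoyAux.summable_T_ky hk₀ (-1/2) v u w 1 2 (by norm_num) SVu SHw Bv)
      (GoyAux.summable_T_ky hk₀ (-1/2) w u v 1 2 (by norm_num) SVu SHv Bw)
      (GoyAux.summable_T_kx hk₀ (1/8) u v w (-1) (-2) (by norm_num) SVu SHw Bv)
      (GoyAux.summable_T_kx hk₀ (1/8) u w v (-1) (-2) (by norm_num) SVu SHv Bw)
  · have SVv := GoyAux.memV_z hv
    have SVw := GoyAux.memV_z hw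
    have SHv := GoyAux.memH_z hv.1
    have SHw := GoyAux.memH_z hw.1
    have Bu := GoyAux.ext_bound hu
    exact GoyAux.main hk₀ u v w
      (GoyAux.summable_T_kx hk₀ (1/4) v u w (-1) 1 (by norm_num) SVv SHw Bu)
      (GoyAux.summable_T_kx hk₀ (1/4) w u v (-1) 1 (by norm_num) SVw SHv Bu)
      (GoyAux.summable_T_ky hk₀ (-1/2) u v w 1 2 (by norm_num) SVv SHw Bu)
      (GoyAux.summable_T_ky hk₀ (-1/2) u w v 1 2 (by norm_num) SVw SHv Bu)
      (GoyAux.summable_T_kx hk₀ (-1/2) v u w 1 2 (by norm_num) SVv SHw Bu)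
      (GoyAux.summable_T_kx hk₀ (-1/2) w u v 1 2 (by norm_num) SVw SHv Bu)
      (GoyAux.summable_T_ky hk₀ (1/8) u v w (-1) (-2) (by norm_num) SVv SHw Bu)
      (GoyAux.summable_T_ky hk₀ (1/8) u w v (-1) (-2) (by norm_num) SVw SHv Bu)

end
end

section
/- Fix δ ∈ ℝ. For the Sabra bilinear operator B with parameter δ, one has ⟨B(u,v), v⟩_H = 0, i.e. Re Σ_{n≥1} (B(u,v))_n conj(v_n) = 0, whenever u ∈ V and v ∈ H, and also whenever v ∈ V and u ∈ H. -/
open ComplexConjugate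

noncomputable section

/-- The Sabra bilinear operator with parameter `δ`. -/
def sabraB (k₀ δ : ℝ) (u v : ℕ → ℂ) : ℕ → ℂ := fun n =>
  (Complex.I / 3) * (kseq k₀ ((n : ℤ) + 1)) *
      ((1 + (δ : ℂ)) * conj (ext v ((n : ℤ) + 1)) * ext u ((n : ℤ) + 2)
        + (2 - (δ : ℂ)) * conj (ext u ((n : ℤ) + 1)) * ext v ((n : ℤ) + 2))
  + (Complex.I / 3) * (kseq k₀ (n : ℤ)) *
      ((1 - 2 * (δ : ℂ)) * conj (ext u ((n : ℤ) - 1)) * ext v ((n : ℤ) + 1)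
        - (1 + (δ : ℂ)) * conj (ext v ((n : ℤ) - 1)) * ext u ((n : ℤ) + 1))
  + (Complex.I / 3) * (kseq k₀ ((n : ℤ) - 1)) *
      ((2 - (δ : ℂ)) * ext u ((n : ℤ) - 1) * ext v ((n : ℤ) - 2)
        + (1 - 2 * (δ : ℂ)) * ext u ((n : ℤ) - 2) * ext v ((n : ℤ) - 1))

/-!
Writing `Π_n` for the energy flux through shell `n` (`sabraFlux`, a sum of triple products
of neighbouring shells weighted by `k_n`), the energy transfer telescopes:
`Re (B(u,v)_n conj v_n) = Re Π_n - Re Π_{n-1}`, and `Π_0 = 0` by the boundary convention.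
So the `N`-th partial sum of `⟨B(u,v), v⟩_H` is `Re Π_N`. In each triple product one factor
is `k_m w_m` with `w ∈ V` and the other two are values of sequences in `H`; all of them tend
to `0`, hence so do `Π_N` and the partial sums.
-/

open Filter Topology

theorem tsum_eq_zero_of_tendsto_sum_range {G : Type*} [AddCommGroup G] [TopologicalSpace G]
    [T2Space G] {f : ℕ → G} (h : Tendsto (fun N ↦ ∑ i ∈ Finset.range N, f i) atTop (𝓝 0)) :
    ∑' i, f i = 0 := by
  by_cases hf : Summable f
  · exact tendsto_nhds_unique hf.hasSum.tendsto_sum_nat h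
  · exact tsum_eq_zero_of_not_summable hf

theorem tendsto_atTop_comp_add_const {α : Type*} {f : ℤ → α} {l : Filter α}
    (hf : Tendsto f atTop l) (d : ℤ) : Tendsto (fun m ↦ f (m + d)) atTop l :=
  hf.comp (tendsto_atTop_add_const_right _ d tendsto_id)

theorem tendsto_conj_mul_conj_mul_zero {α : Type*} {l : Filter α} {f g h : α → ℂ}
    (hf : Tendsto f l (𝓝 0)) (hg : Tendsto g l (𝓝 0)) (hh : Tendsto h l (𝓝 0)) :
    Tendsto (fun m ↦ conj (f m) * conj (g m) * h m) l (𝓝 0) := by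
  simpa using (hf.star.mul hg.star).mul hh

namespace Sabra

theorem ext_natCast_add_one (w : ℕ → ℂ) (n : ℕ) : ext w (n + 1) = w (n + 1) := by
  rw [ext, if_pos (by omega)]
  congr

theorem tendsto_ext {w : ℕ → ℂ} (hw : memH w) : Tendsto (ext w) atTop (𝓝 0) := by
  have hnorm : Tendsto (fun n ↦ ‖w (n + 1)‖) atTop (𝓝 0) := by
    simpa [Real.sqrt_sq (norm_nonneg _)] using hw.tendsto_atTop_zero.sqrt
  rw [← Nat.map_cast_int_atTop, tendsto_map'_iff, ← tendsto_add_atTop_iff_nat 1]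
  simpa [Function.comp_def, ext_natCast_add_one] using tendsto_zero_iff_norm_tendsto_zero.2 hnorm

theorem ext_kseq_mul (k₀ : ℝ) (w : ℕ → ℂ) (m : ℤ) :
    ext (fun n ↦ (kseq k₀ n : ℂ) * w n) m = kseq k₀ m * ext w m := by
  unfold ext
  split_ifs with hm
  · simp only [Int.toNat_of_nonneg (by omega : 0 ≤ m)]
  · rw [mul_zero]

theorem memH_kseq_mul {k₀ : ℝ} {w : ℕ → ℂ} (hw : memV k₀ w) :
    memH (fun n ↦ (kseq k₀ n : ℂ) * w n) := by
  refine hw.2.congr fun n ↦ ?_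
  rw [norm_mul, Complex.norm_real, Real.norm_eq_abs, mul_pow, sq_abs]
  push_cast
  rfl

theorem kseq_add_eq_zpow_mul (k₀ : ℝ) (m c d : ℤ) :
    kseq k₀ (m + c) = 2 ^ (c - d) * kseq k₀ (m + d) := by
  rw [kseq, kseq, mul_left_comm, ← zpow_add₀ two_ne_zero]
  ring_nf

theorem tendsto_kseq_mul_ext_shift {k₀ : ℝ} {w : ℕ → ℂ} (hw : memV k₀ w) (c d : ℤ) :
    Tendsto (fun m ↦ (kseq k₀ (m + c) : ℂ) * ext w (m + d)) atTop (𝓝 0) := by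
  have h := (tendsto_atTop_comp_add_const (tendsto_ext (memH_kseq_mul hw)) d).const_mul
    ((2 : ℂ) ^ (c - d))
  rw [mul_zero] at h
  refine h.congr fun m ↦ ?_
  rw [ext_kseq_mul, kseq_add_eq_zpow_mul k₀ m c d]
  push_cast
  ring

def sabraFlux (k₀ δ : ℝ) (u v : ℕ → ℂ) (n : ℤ) : ℂ :=
  Complex.I / 3 * kseq k₀ (n + 1) *
      ((1 + (δ : ℂ)) * conj (ext v n) * conj (ext v (n + 1)) * ext u (n + 2)
        + (2 - (δ : ℂ)) * conj (ext v n) * conj (ext u (n + 1)) * ext v (n + 2))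
    + Complex.I / 3 * kseq k₀ n *
      ((2 - (δ : ℂ)) * conj (ext v (n - 1)) * conj (ext u n) * ext v (n + 1)
        + (1 - 2 * (δ : ℂ)) * conj (ext u (n - 1)) * conj (ext v n) * ext v (n + 1))

theorem sabraFlux_zero (k₀ δ : ℝ) (u v : ℕ → ℂ) : sabraFlux k₀ δ u v 0 = 0 := by
  simp [sabraFlux, ext]

theorem re_sabraB_mul_conj (k₀ δ : ℝ) (u v : ℕ → ℂ) (n : ℕ) :
    (sabraB k₀ δ u v n * conj (ext v n)).re
      = (sabraFlux k₀ δ u v n).re - (sabraFlux k₀ δ u v (n - 1)).re := by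
  simp only [sabraB, sabraFlux, show (n : ℤ) - 1 - 1 = n - 2 by ring,
    show (n : ℤ) - 1 + 1 = n by ring, show (n : ℤ) - 1 + 2 = n + 1 by ring]
  generalize ext u = a, ext v = b
  apply Complex.ofReal_injective
  simp only [Complex.ofReal_sub, Complex.re_eq_add_conj, map_add, map_sub, map_mul, map_div₀,
    Complex.conj_I, Complex.conj_conj, Complex.conj_ofReal, map_ofNat, map_one]
  ring

theorem sum_range_re_sabraB_mul_conj (k₀ δ : ℝ) (u v : ℕ → ℂ) (N : ℕ) :
    ∑ n ∈ Finset.range N, (sabraB k₀ δ u v (n + 1) * conj (v (n + 1))).re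
      = (sabraFlux k₀ δ u v N).re := by
  have hterm (n : ℕ) : (sabraB k₀ δ u v (n + 1) * conj (v (n + 1))).re
      = (sabraFlux k₀ δ u v (n + 1 : ℕ)).re - (sabraFlux k₀ δ u v n).re := by
    rw [← ext_natCast_add_one v n, ← Nat.cast_succ, re_sabraB_mul_conj, Nat.cast_succ,
      add_sub_cancel_right]
  rw [Finset.sum_congr rfl fun n _ ↦ hterm n,
    Finset.sum_range_sub (fun n : ℕ ↦ (sabraFlux k₀ δ u v n).re), Nat.cast_zero, sabraFlux_zero,
    Complex.zero_re, sub_zero]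

theorem tendsto_sabraFlux {k₀ δ : ℝ} {u v : ℕ → ℂ}
    (h : (memV k₀ u ∧ memH v) ∨ (memV k₀ v ∧ memH u)) :
    Tendsto (sabraFlux k₀ δ u v) atTop (𝓝 0) := by
  have term {f g h : ℤ → ℂ} := @tendsto_conj_mul_conj_mul_zero ℤ atTop f g h
  rcases h with ⟨hu, hv⟩ | ⟨hv, hu⟩
  · have ku := tendsto_kseq_mul_ext_shift hu
    have v' := tendsto_atTop_comp_add_const (tendsto_ext hv)
    have hX := ((((term (v' 0) (v' 1) (ku 1 2)).const_mul (Complex.I / 3 * (1 + δ))).add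
      ((term (v' 0) (ku 1 1) (v' 2)).const_mul (Complex.I / 3 * (2 - δ)))).add
      ((term (v' (-1)) (ku 0 0) (v' 1)).const_mul (Complex.I / 3 * (2 - δ)))).add
      ((term (ku 0 (-1)) (v' 0) (v' 1)).const_mul (Complex.I / 3 * (1 - 2 * δ)))
    simp only [mul_zero, add_zero] at hX
    refine hX.congr fun m ↦ ?_
    simp only [sabraFlux, ← sub_eq_add_neg, map_mul, Complex.conj_ofReal]
    ring
  · have kv := tendsto_kseq_mul_ext_shift hv
    have u' := tendsto_atTop_comp_add_const (tendsto_ext hu)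
    have v' := tendsto_atTop_comp_add_const (tendsto_ext hv.1)
    have hX := ((((term (v' 0) (kv 1 1) (u' 2)).const_mul (Complex.I / 3 * (1 + δ))).add
      ((term (v' 0) (u' 1) (kv 1 2)).const_mul (Complex.I / 3 * (2 - δ)))).add
      ((term (v' (-1)) (u' 0) (kv 0 1)).const_mul (Complex.I / 3 * (2 - δ)))).add
      ((term (u' (-1)) (kv 0 0) (v' 1)).const_mul (Complex.I / 3 * (1 - 2 * δ)))
    simp only [mul_zero, add_zero] at hX
    refine hX.congr fun m ↦ ?_
    simp only [sabraFlux, ← sub_eq_add_neg, map_mul, Complex.conj_ofReal]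
    ring

end Sabra

theorem sabra_energy_conservation_general (k₀ δ : ℝ) (u v : ℕ → ℂ)
    (h : (memV k₀ u ∧ memH v) ∨ (memV k₀ v ∧ memH u)) :
    innerH (sabraB k₀ δ u v) v = 0 := by
  refine tsum_eq_zero_of_tendsto_sum_range ?_
  simp only [Sabra.sum_range_re_sabraB_mul_conj]
  exact (Complex.continuous_re.tendsto' 0 0 rfl).comp
    ((Sabra.tendsto_sabraFlux h).comp tendsto_natCast_atTop_atTop)

/-- `⟨B(u,v), v⟩_H = 0` whenever `u ∈ V, v ∈ H`, and also whenever `v ∈ V, u ∈ H`,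
for the Sabra bilinear operator `B` with parameter `δ`. -/
theorem sabra_energy_conservation (k₀ δ : ℝ) (hk₀ : 0 < k₀) (u v : ℕ → ℂ)
    (h : (memV k₀ u ∧ memH v) ∨ (memV k₀ v ∧ memH u)) :
    innerH (sabraB k₀ δ u v) v = 0 :=
  sabra_energy_conservation_general k₀ δ u v h

end
end

section
/- There exists a constant C* > 0 such that for all u, v ∈ H the sequence B(u,v) belongs to V' and |B(u,v)|_{V'}^2 = Σ_{n≥1} k_n^{-2} |(B(u,v))_n|^2 ≤ C* |u|_H^2 |v|_H^2, where B is the GOY bilinear operator. -/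
open ComplexConjugate

noncomputable section

/-- Membership in `V'`: `∑_{n ≥ 1} k_n^{-2} |u_n|² < ∞`. -/
def memV' (k₀ : ℝ) (u : ℕ → ℂ) : Prop :=
  Summable (fun n : ℕ => (kseq k₀ (n + 1))⁻¹ ^ 2 * ‖u (n + 1)‖ ^ 2)

/-- The squared `V'`-norm `|u|_{V'}² = ∑_{n ≥ 1} k_n^{-2} |u_n|²`. -/
def normV'sq (k₀ : ℝ) (u : ℕ → ℂ) : ℝ :=
  ∑' n : ℕ, (kseq k₀ (n + 1))⁻¹ ^ 2 * ‖u (n + 1)‖ ^ 2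

lemma ext_zero (u : ℕ → ℂ) {m : ℤ} (h : m < 1) : ext u m = 0 := by
  simp [ext, not_le.mpr h]

lemma ext_comp (u : ℕ → ℂ) (n : ℕ) : ext u ((n : ℤ) + 1) = u (n + 1) := by
  have h1 : (1:ℤ) ≤ (n:ℤ) + 1 := by omega
  have h2 : ((n:ℤ) + 1).toNat = n + 1 := by omega
  simp [ext, h1, h2]

lemma hinj1 : Function.Injective (fun n : ℕ => (n : ℤ) + 1) := by
  intro a b h; simpa using h

lemma support_sub (u : ℕ → ℂ) :
    Function.support (fun m : ℤ => ‖ext u m‖ ^ 2) ⊆ Set.range (fun n : ℕ => (n : ℤ) + 1) := by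
  intro m hm
  by_contra hr
  apply hm
  have hm1 : m < 1 := by
    by_contra h
    push_neg at h
    exact hr ⟨(m - 1).toNat, show ((m-1).toNat : ℤ) + 1 = m by omega⟩
  simp [ext_zero u hm1]

lemma summable_ext_sq {u : ℕ → ℂ} (hu : memH u) :
    Summable (fun m : ℤ => ‖ext u m‖ ^ 2) := by
  refine (Function.Injective.summable_iff hinj1 ?_).mp ?_
  · intro m hm
    have hm1 : m < 1 := by
      by_contra h
      push_neg at h
      exact hm ⟨(m - 1).toNat, show ((m-1).toNat : ℤ) + 1 = m by omega⟩
    simp [ext_zero u hm1]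
  · have e : ((fun m : ℤ => ‖ext u m‖ ^ 2) ∘ fun n : ℕ => (n : ℤ) + 1)
        = fun n : ℕ => ‖u (n + 1)‖ ^ 2 := funext fun n => by
      simp [Function.comp_apply, ext_comp]
    rw [e]; exact hu

lemma tsum_ext_sq {u : ℕ → ℂ} :
    ∑' m : ℤ, ‖ext u m‖ ^ 2 = ∑' n : ℕ, ‖u (n + 1)‖ ^ 2 := by
  rw [← Function.Injective.tsum_eq hinj1 (support_sub u)]
  simp [ext_comp]

lemma summable_ext_shift {u : ℕ → ℂ} (hu : memH u) (a : ℤ) :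
    Summable (fun n : ℕ => ‖ext u ((n : ℤ) + a)‖ ^ 2) := by
  have hinj : Function.Injective (fun n : ℕ => (n : ℤ) + a) := by
    intro x y h; simpa using h
  exact (summable_ext_sq hu).comp_injective hinj

lemma tsum_ext_shift_le {u : ℕ → ℂ} (hu : memH u) (a : ℤ) :
    ∑' n : ℕ, ‖ext u ((n : ℤ) + a)‖ ^ 2 ≤ ∑' n : ℕ, ‖u (n + 1)‖ ^ 2 := by
  rw [← tsum_ext_sq]
  exact Summable.tsum_le_tsum_of_inj (fun n : ℕ => (n : ℤ) + a)
    (fun x y h => by simpa using h) (fun c _ => by positivity) (fun n => le_rfl)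
    (summable_ext_shift hu a) (summable_ext_sq hu)

lemma ext_sq_le {u : ℕ → ℂ} (hu : memH u) (m : ℤ) :
    ‖ext u m‖ ^ 2 ≤ ∑' n : ℕ, ‖u (n + 1)‖ ^ 2 := by
  rw [← tsum_ext_sq]
  exact Summable.le_tsum (summable_ext_sq hu) m (fun _ _ => by positivity)

lemma four_sq (a b c d : ℝ) : (a + b + c + d) ^ 2 ≤ 4 * (a^2 + b^2 + c^2 + d^2) := by
  nlinarith [sq_nonneg (a-b), sq_nonneg (a-c), sq_nonneg (a-d), sq_nonneg (b-c),
    sq_nonneg (b-d), sq_nonneg (c-d)]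

lemma key_ineq (Su Sv p1 q1 p2 q2 p3 q3 p4 : ℝ)
    (hq1 : q1 ^ 2 ≤ Su) (hp2 : p2 ^ 2 ≤ Sv) (hq2 : q2 ^ 2 ≤ Su) (hp4 : p4 ^ 2 ≤ Sv) :
    (1/4 * (p1 * q1) + 1/2 * (q1 * p2) + 1/2 * (p3 * q2) + 1/8 * (q3 * p4)) ^ 2
      ≤ 1/4 * Su * p1 ^ 2 + Sv * q1 ^ 2 + Su * p3 ^ 2 + 1/16 * Sv * q3 ^ 2 := by
  have h := four_sq (1/4 * (p1 * q1)) (1/2 * (q1 * p2)) (1/2 * (p3 * q2)) (1/8 * (q3 * p4))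
  nlinarith [h, mul_nonneg (sq_nonneg p1) (sub_nonneg.mpr hq1),
    mul_nonneg (sq_nonneg q1) (sub_nonneg.mpr hp2),
    mul_nonneg (sq_nonneg p3) (sub_nonneg.mpr hq2),
    mul_nonneg (sq_nonneg q3) (sub_nonneg.mpr hp4)]

lemma goy_pointwise (k₀ : ℝ) (hk₀ : 0 < k₀) (u v : ℕ → ℂ) (hu : memH u) (hv : memH v)
    (n : ℕ) :
    (kseq k₀ ((n : ℕ) + 1))⁻¹ ^ 2 * ‖goyB k₀ u v (n + 1)‖ ^ 2
      ≤ 1/4 * (∑' m : ℕ, ‖u (m + 1)‖ ^ 2) * ‖ext v ((n : ℤ) + 0)‖ ^ 2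
        + (∑' m : ℕ, ‖v (m + 1)‖ ^ 2) * ‖ext u ((n : ℤ) + 2)‖ ^ 2
        + (∑' m : ℕ, ‖u (m + 1)‖ ^ 2) * ‖ext v ((n : ℤ) + 2)‖ ^ 2
        + 1/16 * (∑' m : ℕ, ‖v (m + 1)‖ ^ 2) * ‖ext u ((n : ℤ) + 0)‖ ^ 2 := by
  set Su := ∑' m : ℕ, ‖u (m + 1)‖ ^ 2
  set Sv := ∑' m : ℕ, ‖v (m + 1)‖ ^ 2
  set x : ℤ := ((n + 1 : ℕ) : ℤ) with hx
  set K : ℝ := kseq k₀ x with hK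
  have hKpos : 0 < K := mul_pos hk₀ (zpow_pos (by norm_num) _)
  set A : ℂ := (1/4 : ℂ) * conj (ext v (x - 1)) * conj (ext u (x + 1)) with hA
  set B1 : ℂ := conj (ext u (x + 1)) * conj (ext v (x + 2)) with hB1
  set B2 : ℂ := conj (ext v (x + 1)) * conj (ext u (x + 2)) with hB2
  set C : ℂ := (1/8 : ℂ) * conj (ext u (x - 1)) * conj (ext v (x - 2)) with hC
  set E : ℂ := A - (1/2 : ℂ) * (B1 + B2) + C with hE
  have hgoy : goyB k₀ u v (n + 1) = Complex.I * (K : ℂ) * E := rfl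
  have hnorm : ‖goyB k₀ u v (n + 1)‖ = K * ‖E‖ := by
    rw [hgoy, norm_mul, norm_mul, Complex.norm_I, one_mul, Complex.norm_real,
      Real.norm_eq_abs, abs_of_pos hKpos]
  have hlhs : (kseq k₀ ((n : ℕ) + 1))⁻¹ ^ 2 * ‖goyB k₀ u v (n + 1)‖ ^ 2 = ‖E‖ ^ 2 := by
    rw [hnorm]
    have hKne : K ≠ 0 := ne_of_gt hKpos
    have hkk : kseq k₀ ((n : ℕ) + 1) = K := by rw [hK, hx]; push_cast; ring_nf
    rw [hkk]
    field_simp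
  rw [hlhs]
  set p1 := ‖ext v (x - 1)‖ with hp1d
  set q1 := ‖ext u (x + 1)‖ with hq1d
  set p2 := ‖ext v (x + 2)‖
  set q2 := ‖ext u (x + 2)‖
  set p3 := ‖ext v (x + 1)‖ with hp3d
  set q3 := ‖ext u (x - 1)‖ with hq3d
  set p4 := ‖ext v (x - 2)‖
  have e4 : ‖(1/4 : ℂ)‖ = 1/4 := by norm_num
  have e8 : ‖(1/8 : ℂ)‖ = 1/8 := by norm_num
  have hnA : ‖A‖ = 1/4 * (p1 * q1) := by
    rw [hA, norm_mul, norm_mul, RCLike.norm_conj, RCLike.norm_conj, e4, ← hp1d, ← hq1d]; ring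
  have hnB1 : ‖B1‖ = q1 * p2 := by
    rw [hB1, norm_mul, RCLike.norm_conj, RCLike.norm_conj]
  have hnB2 : ‖B2‖ = p3 * q2 := by
    rw [hB2, norm_mul, RCLike.norm_conj, RCLike.norm_conj]
  have hnC : ‖C‖ = 1/8 * (q3 * p4) := by
    rw [hC, norm_mul, norm_mul, RCLike.norm_conj, RCLike.norm_conj, e8, ← hq3d]; ring
  have hnB : ‖(1/2 : ℂ) * (B1 + B2)‖ ≤ 1/2 * (q1 * p2) + 1/2 * (p3 * q2) := by
    rw [norm_mul]
    have h12 : ‖(1/2 : ℂ)‖ = 1/2 := by norm_num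
    rw [h12]
    have := norm_add_le B1 B2
    rw [hnB1, hnB2] at this
    linarith
  have hEle : ‖E‖ ≤ 1/4 * (p1 * q1) + 1/2 * (q1 * p2) + 1/2 * (p3 * q2) + 1/8 * (q3 * p4) := by
    have h1 : ‖E‖ ≤ ‖A - (1/2 : ℂ) * (B1 + B2)‖ + ‖C‖ := by rw [hE]; exact norm_add_le _ _
    have h2 : ‖A - (1/2 : ℂ) * (B1 + B2)‖ ≤ ‖A‖ + ‖(1/2 : ℂ) * (B1 + B2)‖ := norm_sub_le _ _
    rw [hnA] at h2
    rw [hnC] at h1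
    linarith
  have hEsq : ‖E‖ ^ 2
      ≤ (1/4 * (p1 * q1) + 1/2 * (q1 * p2) + 1/2 * (p3 * q2) + 1/8 * (q3 * p4)) ^ 2 :=
    pow_le_pow_left₀ (norm_nonneg _) hEle 2
  have hkey := key_ineq Su Sv p1 q1 p2 q2 p3 q3 p4
    (ext_sq_le hu _) (ext_sq_le hv _) (ext_sq_le hu _) (ext_sq_le hv _)
  have hidx1 : (n : ℤ) + 0 = x - 1 := by rw [hx]; push_cast; ring
  have hidx2 : (n : ℤ) + 2 = x + 1 := by rw [hx]; push_cast; ring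
  rw [hidx1, hidx2, ← hp1d, ← hq3d, ← hq1d, ← hp3d]
  linarith

/-- There is `C* > 0` such that for all `u, v ∈ H`, `B(u,v) ∈ V'` and
`|B(u,v)|_{V'}² ≤ C* |u|_H² |v|_H²`, where `B` is the GOY bilinear operator. -/
theorem goy_Vprime_estimate (k₀ : ℝ) (hk₀ : 0 < k₀) :
    ∃ Cstar : ℝ, 0 < Cstar ∧ ∀ u v : ℕ → ℂ, memH u → memH v →
      memV' k₀ (goyB k₀ u v) ∧
      normV'sq k₀ (goyB k₀ u v)
        ≤ Cstar * (∑' n : ℕ, ‖u (n + 1)‖ ^ 2) * (∑' n : ℕ, ‖v (n + 1)‖ ^ 2) := by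
  refine ⟨4, by norm_num, fun u v hu hv => ?_⟩
  set Su := ∑' n : ℕ, ‖u (n + 1)‖ ^ 2 with hSu
  set Sv := ∑' n : ℕ, ‖v (n + 1)‖ ^ 2 with hSv
  have hSu0 : 0 ≤ Su := tsum_nonneg (fun n => by positivity)
  have hSv0 : 0 ≤ Sv := tsum_nonneg (fun n => by positivity)
  have hg1 : Summable (fun n : ℕ => 1/4 * Su * ‖ext v ((n : ℤ) + 0)‖ ^ 2) :=
    (summable_ext_shift hv 0).mul_left _
  have hg2 : Summable (fun n : ℕ => Sv * ‖ext u ((n : ℤ) + 2)‖ ^ 2) :=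
    (summable_ext_shift hu 2).mul_left _
  have hg3 : Summable (fun n : ℕ => Su * ‖ext v ((n : ℤ) + 2)‖ ^ 2) :=
    (summable_ext_shift hv 2).mul_left _
  have hg4 : Summable (fun n : ℕ => 1/16 * Sv * ‖ext u ((n : ℤ) + 0)‖ ^ 2) :=
    (summable_ext_shift hu 0).mul_left _
  have hgsum : Summable (fun n : ℕ =>
      1/4 * Su * ‖ext v ((n : ℤ) + 0)‖ ^ 2 + Sv * ‖ext u ((n : ℤ) + 2)‖ ^ 2
        + Su * ‖ext v ((n : ℤ) + 2)‖ ^ 2 + 1/16 * Sv * ‖ext u ((n : ℤ) + 0)‖ ^ 2) :=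
    ((hg1.add hg2).add hg3).add hg4
  have hpt := goy_pointwise k₀ hk₀ u v hu hv
  have hfnonneg : ∀ n : ℕ, 0 ≤ (kseq k₀ ((n : ℕ) + 1))⁻¹ ^ 2 * ‖goyB k₀ u v (n + 1)‖ ^ 2 :=
    fun n => by positivity
  have hmem : memV' k₀ (goyB k₀ u v) := Summable.of_nonneg_of_le hfnonneg hpt hgsum
  refine ⟨hmem, ?_⟩
  have hle : normV'sq k₀ (goyB k₀ u v)
      ≤ ∑' n : ℕ, (1/4 * Su * ‖ext v ((n : ℤ) + 0)‖ ^ 2 + Sv * ‖ext u ((n : ℤ) + 2)‖ ^ 2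
        + Su * ‖ext v ((n : ℤ) + 2)‖ ^ 2 + 1/16 * Sv * ‖ext u ((n : ℤ) + 0)‖ ^ 2) :=
    Summable.tsum_le_tsum hpt hmem hgsum
  have htg : (∑' n : ℕ, (1/4 * Su * ‖ext v ((n : ℤ) + 0)‖ ^ 2 + Sv * ‖ext u ((n : ℤ) + 2)‖ ^ 2
        + Su * ‖ext v ((n : ℤ) + 2)‖ ^ 2 + 1/16 * Sv * ‖ext u ((n : ℤ) + 0)‖ ^ 2))
      = 1/4 * Su * (∑' n : ℕ, ‖ext v ((n : ℤ) + 0)‖ ^ 2)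
        + Sv * (∑' n : ℕ, ‖ext u ((n : ℤ) + 2)‖ ^ 2)
        + Su * (∑' n : ℕ, ‖ext v ((n : ℤ) + 2)‖ ^ 2)
        + 1/16 * Sv * (∑' n : ℕ, ‖ext u ((n : ℤ) + 0)‖ ^ 2) := by
    rw [Summable.tsum_add ((hg1.add hg2).add hg3) hg4, Summable.tsum_add (hg1.add hg2) hg3, Summable.tsum_add hg1 hg2,
      tsum_mul_left, tsum_mul_left, tsum_mul_left, tsum_mul_left]
  have hT1 : (∑' n : ℕ, ‖ext v ((n : ℤ) + 0)‖ ^ 2) ≤ Sv := tsum_ext_shift_le hv 0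
  have hT2 : (∑' n : ℕ, ‖ext u ((n : ℤ) + 2)‖ ^ 2) ≤ Su := tsum_ext_shift_le hu 2
  have hT3 : (∑' n : ℕ, ‖ext v ((n : ℤ) + 2)‖ ^ 2) ≤ Sv := tsum_ext_shift_le hv 2
  have hT4 : (∑' n : ℕ, ‖ext u ((n : ℤ) + 0)‖ ^ 2) ≤ Su := tsum_ext_shift_le hu 0
  have hm1 : Su * (∑' n : ℕ, ‖ext v ((n : ℤ) + 0)‖ ^ 2) ≤ Su * Sv :=
    mul_le_mul_of_nonneg_left hT1 hSu0
  have hm2 : Sv * (∑' n : ℕ, ‖ext u ((n : ℤ) + 2)‖ ^ 2) ≤ Sv * Su :=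
    mul_le_mul_of_nonneg_left hT2 hSv0
  have hm3 : Su * (∑' n : ℕ, ‖ext v ((n : ℤ) + 2)‖ ^ 2) ≤ Su * Sv :=
    mul_le_mul_of_nonneg_left hT3 hSu0
  have hm4 : Sv * (∑' n : ℕ, ‖ext u ((n : ℤ) + 0)‖ ^ 2) ≤ Sv * Su :=
    mul_le_mul_of_nonneg_left hT4 hSv0
  have hmul : 0 ≤ Su * Sv := mul_nonneg hSu0 hSv0
  rw [htg] at hle
  have hcomm : Sv * Su = Su * Sv := mul_comm _ _
  calc normV'sq k₀ (goyB k₀ u v) ≤ _ := hle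
    _ ≤ 4 * Su * Sv := by rw [hcomm] at hm2 hm4; linarith

end
end
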